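/- If F : X ⇉ Y has the Aubin property around (x̄, ȳ) ∈ Gr F and is proto-differentiable at x̄ relative to ȳ (i.e., D_U F(x̄,ȳ) = D_B F(x̄,ȳ)), then F is semi-differentiable at x̄ relative to ȳ (i.e., D_D F(x̄,ȳ) = D_B F(x̄,ȳ)). -/

import Mathlib

open Filter Topology Pointwise

section Defs

variable {X Y : Type*} [NormedAddCommGroup X] [NormedSpace ℝ X]
  [NormedAddCommGroup Y] [NormedSpace ℝ Y]

/-- A sequence of positive reals tending to zero. -/
def PosToZero (t : ℕ → ℝ) : Prop := (∀ n, 0 < t n) ∧ Tendsto t atTop (𝓝 0)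

/-- First order Bouligand tangent cone. -/
def TB (D : Set X) (x : X) : Set X :=
  {u | ∃ t : ℕ → ℝ, PosToZero t ∧ ∃ w : ℕ → X, Tendsto w atTop (𝓝 u) ∧
    ∀ n, x + t n • w n ∈ D}

/-- First order Ursescu tangent cone. -/
def TU (D : Set X) (x : X) : Set X :=
  {u | ∀ t : ℕ → ℝ, PosToZero t → ∃ w : ℕ → X, Tendsto w atTop (𝓝 u) ∧
    ∀ n, x + t n • w n ∈ D}

/-- Second order Bouligand tangent set. -/
def TB2 (D : Set X) (x x₁ : X) : Set X :=
  {u | ∃ t : ℕ → ℝ, PosToZero t ∧ ∃ w : ℕ → X, Tendsto w atTop (𝓝 u) ∧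
    ∀ n, x + t n • x₁ + (t n) ^ 2 • w n ∈ D}

/-- Second order Ursescu tangent set. -/
def TU2 (D : Set X) (x x₁ : X) : Set X :=
  {u | ∀ t : ℕ → ℝ, PosToZero t → ∃ w : ℕ → X, Tendsto w atTop (𝓝 u) ∧
    ∃ n₀ : ℕ, ∀ n ≥ n₀, x + t n • x₁ + (t n) ^ 2 • w n ∈ D}

/-- Graph of a set-valued map. -/
def SVGraph (F : X → Set Y) : Set (X × Y) := {p | p.2 ∈ F p.1}

/-- First order Bouligand derivative. -/
def DB (F : X → Set Y) (x : X) (y : Y) (u : X) : Set Y :=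
  {v | (u, v) ∈ TB (SVGraph F) (x, y)}

/-- First order Ursescu derivative. -/
def DU (F : X → Set Y) (x : X) (y : Y) (u : X) : Set Y :=
  {v | (u, v) ∈ TU (SVGraph F) (x, y)}

/-- Dini lower derivative. -/
def DD (F : X → Set Y) (x : X) (y : Y) (u : X) : Set Y :=
  {v | ∀ t : ℕ → ℝ, PosToZero t → ∀ w : ℕ → X, Tendsto w atTop (𝓝 u) →
    ∃ v' : ℕ → Y, Tendsto v' atTop (𝓝 v) ∧
      ∃ n₀ : ℕ, ∀ n ≥ n₀, y + t n • v' n ∈ F (x + t n • w n)}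

/-- Aubin property of a set-valued map around a point of its graph. -/
def AubinProperty (F : X → Set Y) (x : X) (y : Y) : Prop :=
  ∃ L > (0:ℝ), ∃ r > (0:ℝ), ∀ x' x'' : X, ‖x' - x‖ ≤ r → ‖x'' - x‖ ≤ r →
    ∀ y' ∈ F x', ‖y' - y‖ ≤ r → ∃ y'' ∈ F x'', ‖y' - y''‖ ≤ L * ‖x' - x''‖

end Defs

/-!
Under the Aubin property a tangent direction `(u, v)` of the graph along `tₙ ↓ 0` can be
transported to any nearby direction `wₙ → u` in the domain: the Lipschitz estimate,
rescaled by `tₙ`, moves `vₙ` by at most `L ‖zₙ - wₙ‖ → 0`. Hence `D_U F ⊆ D_D F`, while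
`D_D F ⊆ D_B F` always holds; proto-differentiability closes the chain.
-/

section SetValuedDerivatives

variable {X Y : Type*} [NormedAddCommGroup X] [NormedSpace ℝ X]
  [NormedAddCommGroup Y] [NormedSpace ℝ Y]

theorem posToZero_one_div_add_one : PosToZero (fun n : ℕ => 1 / ((n : ℝ) + 1)) :=
  ⟨fun _ => by positivity, tendsto_one_div_add_atTop_nhds_zero_nat⟩

theorem PosToZero.comp_add {t : ℕ → ℝ} (ht : PosToZero t) (k : ℕ) :
    PosToZero (fun n => t (n + k)) :=
  ⟨fun n => ht.1 (n + k), ht.2.comp (tendsto_add_atTop_nat k)⟩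

theorem PosToZero.tendsto_smul_zero {E : Type*} [NormedAddCommGroup E] [NormedSpace ℝ E]
    {t : ℕ → ℝ} (ht : PosToZero t) {w : ℕ → E} {u : E} (hw : Tendsto w atTop (𝓝 u)) :
    Tendsto (fun n => t n • w n) atTop (𝓝 0) := by
  simpa using ht.2.smul hw

theorem PosToZero.eventually_norm_smul_le {E : Type*} [NormedAddCommGroup E] [NormedSpace ℝ E]
    {t : ℕ → ℝ} (ht : PosToZero t) {w : ℕ → E} {u : E} (hw : Tendsto w atTop (𝓝 u))
    {r : ℝ} (hr : 0 < r) : ∀ᶠ n in atTop, ‖t n • w n‖ ≤ r :=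
  (ht.tendsto_smul_zero hw).norm.eventually_le_const (by simpa using hr)

theorem mem_TB_of_eventually {E : Type*} [NormedAddCommGroup E] [NormedSpace ℝ E]
    {D : Set E} {x u : E} {t : ℕ → ℝ} (ht : PosToZero t) {w : ℕ → E}
    (hw : Tendsto w atTop (𝓝 u)) (hmem : ∀ᶠ n in atTop, x + t n • w n ∈ D) :
    u ∈ TB D x := by
  obtain ⟨k, hk⟩ := eventually_atTop.mp hmem
  exact ⟨fun n => t (n + k), ht.comp_add k, fun n => w (n + k),
    hw.comp (tendsto_add_atTop_nat k), fun n => hk (n + k) (Nat.le_add_left k n)⟩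

theorem DD_subset_DB (F : X → Set Y) (x : X) (y : Y) (u : X) : DD F x y u ⊆ DB F x y u := by
  intro v hv
  obtain ⟨v', hv', n₀, hmem⟩ := hv _ posToZero_one_div_add_one (fun _ => u) tendsto_const_nhds
  refine mem_TB_of_eventually posToZero_one_div_add_one (tendsto_const_nhds.prodMk_nhds hv') ?_
  filter_upwards [eventually_ge_atTop n₀] with n hn
  simpa [SVGraph, Prod.smul_def] using hmem n hn

theorem exists_rescaled_aubin {F : X → Set Y} {x : X} {y : Y} {L r t : ℝ}
    (hF : ∀ x' x'' : X, ‖x' - x‖ ≤ r → ‖x'' - x‖ ≤ r →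
      ∀ y' ∈ F x', ‖y' - y‖ ≤ r → ∃ y'' ∈ F x'', ‖y' - y''‖ ≤ L * ‖x' - x''‖)
    (ht : 0 < t) {a b : X} {v : Y} (hv : y + t • v ∈ F (x + t • a))
    (ha : ‖t • a‖ ≤ r) (hb : ‖t • b‖ ≤ r) (hvr : ‖t • v‖ ≤ r) :
    ∃ v', y + t • v' ∈ F (x + t • b) ∧ ‖v' - v‖ ≤ L * ‖a - b‖ := by
  obtain ⟨y'', hy''F, hy''⟩ := hF (x + t • a) (x + t • b) (by simpa using ha) (by simpa using hb)
    (y + t • v) hv (by simpa using hvr)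
  refine ⟨t⁻¹ • (y'' - y), by rwa [smul_inv_smul₀ ht.ne', add_sub_cancel], ?_⟩
  have hy : t⁻¹ • (y'' - y) - v = t⁻¹ • (y'' - (y + t • v)) := by
    rw [smul_sub, smul_sub, smul_add, inv_smul_smul₀ ht.ne']
    abel
  have hx : (x + t • a) - (x + t • b) = t • (a - b) := by
    rw [smul_sub]; abel
  rw [hx, norm_smul, Real.norm_of_nonneg ht.le, norm_sub_rev] at hy''
  rw [hy, norm_smul, norm_inv, Real.norm_of_nonneg ht.le, inv_mul_le_iff₀ ht]
  linarith

theorem DU_subset_DD_of_aubin {F : X → Set Y} {x : X} {y : Y} (hF : AubinProperty F x y)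
    (u : X) : DU F x y u ⊆ DD F x y u := by
  intro v hv t ht w hw
  obtain ⟨L, -, r, hr, hF⟩ := hF
  obtain ⟨z, hz, hzmem⟩ := hv t ht
  have hz₁ : Tendsto (fun n => (z n).1) atTop (𝓝 u) := (continuous_fst.tendsto _).comp hz
  have hz₂ : Tendsto (fun n => (z n).2) atTop (𝓝 v) := (continuous_snd.tendsto _).comp hz
  obtain ⟨n₀, hn₀⟩ := eventually_atTop.mp ((ht.eventually_norm_smul_le hz₁ hr).and
    ((ht.eventually_norm_smul_le hw hr).and (ht.eventually_norm_smul_le hz₂ hr)))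
  have hstep : ∀ n ≥ n₀, ∃ v' : Y, y + t n • v' ∈ F (x + t n • w n) ∧
      ‖v' - (z n).2‖ ≤ L * ‖(z n).1 - w n‖ := fun n hn =>
    exists_rescaled_aubin hF (ht.1 n) (by simpa [SVGraph, Prod.smul_def] using hzmem n)
      (hn₀ n hn).1 (hn₀ n hn).2.1 (hn₀ n hn).2.2
  choose! v' hv'F hv' using hstep
  refine ⟨v', ?_, n₀, hv'F⟩
  have hdiff : Tendsto (fun n => v' n - (z n).2) atTop (𝓝 0) := by
    refine squeeze_zero_norm' (eventually_atTop.2 ⟨n₀, hv'⟩) ?_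
    simpa using tendsto_const_nhds (x := L) |>.mul (hz₁.sub hw).norm
  simpa using hdiff.add hz₂

end SetValuedDerivatives

theorem semidiff_of_protodiff_aubin_general {X Y : Type*}
    [NormedAddCommGroup X] [NormedSpace ℝ X]
    [NormedAddCommGroup Y] [NormedSpace ℝ Y]
    (F : X → Set Y) (xb : X) (yb : Y)
    (haubin : AubinProperty F xb yb)
    (hproto : ∀ u : X, DU F xb yb u = DB F xb yb u) :
    ∀ u : X, DD F xb yb u = DB F xb yb u := fun u =>
  (DD_subset_DB F xb yb u).antisymm (hproto u ▸ DU_subset_DD_of_aubin haubin u)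

theorem semidiff_of_protodiff_aubin {X Y : Type*}
    [NormedAddCommGroup X] [NormedSpace ℝ X] [CompleteSpace X]
    [NormedAddCommGroup Y] [NormedSpace ℝ Y] [CompleteSpace Y]
    (F : X → Set Y) (xb : X) (yb : Y) (hgr : yb ∈ F xb)
    (haubin : AubinProperty F xb yb)
    (hproto : ∀ u : X, DU F xb yb u = DB F xb yb u) :
    ∀ u : X, DD F xb yb u = DB F xb yb u :=
  semidiff_of_protodiff_aubin_general F xb yb haubin hproto
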